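/- arXiv:1706.02860 — 4 statements merged into one kernel-verified Lean document; each statement's English description precedes it below -/
import Mathlib

section
/- Let R be a principal ideal domain, M a free R-module of rank n, and φ : M → M an R-linear endomorphism. Then for every k with 1 ≤ k ≤ n, the determinant of the induced map ⋀^k(φ) : ⋀^k(M) → ⋀^k(M) equals det(φ)^(binom(n-1, k-1)). -/
/-!
In the basis of `⋀^k M` induced by a basis of `M`, the matrix of `⋀^k φ` is the `k`-th compound
matrix of the matrix of `φ`, whose entries are its `k × k` minors. Functoriality of `⋀^k` makes
the compound matrix multiplicative (Cauchy–Binet), and the identity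
`det (compound k A) = det A ^ (n-1).choose (k-1)` is a polynomial identity in the entries of `A`,
so it suffices to prove it over the fraction field of `ℤ[X_ij]`, where every matrix is a product
of diagonal matrices and transvections. The compound of `diagonal d` is diagonal with entries
`∏ i ∈ s, d i`, and each `d i` occurs in `(n-1).choose (k-1)` of the `k`-subsets `s`. For a
transvection, `f c = det (compound k (transvection i j c))` satisfies `f (c + d) = f c * f d`,
and conjugation by a diagonal matrix gives `f (2 * c) = f c`; so `f c = f c ^ 2` with `f c` a
unit, i.e. `f c = 1`.
-/

/-- The `R`-linear map `⋀^k(f) : ⋀^k(M) → ⋀^k(N)` induced by an `R`-linear map `f : M → N`,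
with `⋀^k(f)(m₁ ∧ ⋯ ∧ m_k) = f(m₁) ∧ ⋯ ∧ f(m_k)`. -/
noncomputable def exteriorPowerMap {R M N : Type*} [CommRing R] [AddCommGroup M] [Module R M]
    [AddCommGroup N] [Module R N] (k : ℕ) (f : M →ₗ[R] N) : ⋀[R]^k M →ₗ[R] ⋀[R]^k N :=
  LinearMap.restrict (ExteriorAlgebra.map f).toLinearMap (p := ⋀[R]^k M) (q := ⋀[R]^k N)
    (fun x hx => by
      have h1 : Submodule.map (ExteriorAlgebra.map f).toLinearMap (⋀[R]^k M) ≤ ⋀[R]^k N := by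
        rw [Submodule.map_pow]
        refine pow_le_pow_left' ?_ k
        rw [ExteriorAlgebra.ι_range_map_map]
        exact LinearMap.map_le_range
      exact h1 (Submodule.mem_map_of_mem hx))

open Finset

theorem Finset.card_filter_mem_powersetCard_univ {α : Type*} [Fintype α] [DecidableEq α]
    (a : α) (k : ℕ) :
    #{s ∈ powersetCard (k + 1) (univ : Finset α) | a ∈ s} = (Fintype.card α - 1).choose k := by
  rw [← card_univ, ← card_erase_of_mem (mem_univ a), ← card_powersetCard]
  refine card_nbij' (·.erase a) (insert a) ?_ ?_ ?_ ?_
  · intro s hs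
    simp only [coe_filter, mem_powersetCard_univ, Set.mem_ofPred_eq] at hs
    simp [mem_powersetCard, erase_subset_erase, card_erase_of_mem hs.2, hs.1]
  · intro s hs
    simp only [mem_coe, mem_powersetCard, subset_erase] at hs
    simp [card_insert_of_notMem hs.1.2, hs.2]
  · intro s hs
    exact insert_erase (mem_filter.1 hs).2
  · intro s hs
    simp only [mem_coe, mem_powersetCard, subset_erase] at hs
    exact erase_insert hs.1.2

theorem Finset.prod_prod_powersetCard_univ {α β : Type*} [Fintype α] [CommMonoid β] {k : ℕ}
    (hk : 1 ≤ k) (f : α → β) :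
    ∏ s ∈ powersetCard k (univ : Finset α), ∏ a ∈ s, f a
      = (∏ a, f a) ^ (Fintype.card α - 1).choose (k - 1) := by
  classical
  obtain ⟨k, rfl⟩ := Nat.exists_eq_add_of_le' hk
  rw [prod_comm' (t' := univ) (s' := fun a => {s ∈ powersetCard (k + 1) univ | a ∈ s})
    (by simp [and_comm]), ← prod_pow]
  simp [card_filter_mem_powersetCard_univ]

open Set.powersetCard (ofFinEmbEquiv)

namespace Matrix

variable {R S : Type*} [CommRing R] [CommRing S] (k : ℕ)
variable {m n : Type*} [LinearOrder m] [LinearOrder n]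

def compound (A : Matrix m n R) : Matrix (Set.powersetCard m k) (Set.powersetCard n k) R :=
  of fun s t => (A.submatrix (ofFinEmbEquiv.symm s) (ofFinEmbEquiv.symm t)).det

theorem compound_map (f : R →+* S) (A : Matrix m n R) :
    compound k (A.map f) = (compound k A).map f := by
  ext s t
  simp [compound, RingHom.map_det, submatrix_map]

theorem compound_diagonal (d : m → R) :
    compound k (diagonal d) = diagonal fun s => ∏ i ∈ s.val, d i := by
  ext s t
  by_cases hst : s = t
  · subst hst
    rw [compound, of_apply, submatrix_diagonal _ _ (ofFinEmbEquiv.symm s).injective, det_diagonal,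
      diagonal_apply_eq, Set.powersetCard.ofFinEmbEquiv_symm_apply]
    conv_rhs => rw [← s.val.image_orderEmbOfFin_univ s.prop]
    rw [prod_image fun i _ j _ h => (s.val.orderEmbOfFin s.prop).injective h]
    rfl
  · rw [diagonal_apply_ne _ hst]
    obtain ⟨a, has, hat⟩ := (Set.powersetCard.exists_mem_notMem_iff_ne s t).1 hst
    obtain ⟨i, rfl⟩ := (Set.powersetCard.mem_range_ofFinEmbEquiv_symm_iff_mem s a).2 has
    refine det_eq_zero_of_row_eq_zero i fun j => diagonal_apply_ne _ fun h => hat ?_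
    rw [h, ← Set.powersetCard.mem_range_ofFinEmbEquiv_symm_iff_mem]
    exact ⟨j, rfl⟩

theorem compound_one : compound k (1 : Matrix m m R) = 1 := by
  simpa using compound_diagonal k (1 : m → R)

end Matrix

theorem LinearMap.toMatrix_exteriorPower_map {R M N : Type*} [CommRing R] [AddCommGroup M]
    [Module R M] [AddCommGroup N] [Module R N] {m n : Type*} [LinearOrder m] [LinearOrder n]
    [Fintype m] [Fintype n] (k : ℕ) (b₁ : Module.Basis m R M) (b₂ : Module.Basis n R N)
    (f : M →ₗ[R] N) :
    toMatrix (b₁.exteriorPower k) (b₂.exteriorPower k) (exteriorPower.map k f)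
      = (toMatrix b₁ b₂ f).compound k := by
  ext s t
  rw [toMatrix_apply, exteriorPower.basis_apply, exteriorPower.map_apply_ιMulti_family,
    exteriorPower.basis_repr_apply, exteriorPower.ιMulti_family,
    exteriorPower.ιMultiDual_apply_ιMulti, Matrix.compound, ← Matrix.det_transpose]
  congr 1
  ext i j
  simp [toMatrix_apply]

namespace Matrix

variable {R : Type*} [CommRing R] (k : ℕ)
variable {l m n : Type*} [LinearOrder l] [LinearOrder m] [LinearOrder n]
  [Fintype l] [Fintype m] [Fintype n]

theorem compound_eq_toMatrix_exteriorPower_map_toLin (A : Matrix m n R) :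
    compound k A = LinearMap.toMatrix ((Pi.basisFun R n).exteriorPower k)
      ((Pi.basisFun R m).exteriorPower k)
      (exteriorPower.map k (toLin (Pi.basisFun R n) (Pi.basisFun R m) A)) := by
  rw [LinearMap.toMatrix_exteriorPower_map, LinearMap.toMatrix_toLin]

theorem compound_mul (A : Matrix l m R) (B : Matrix m n R) :
    compound k (A * B) = compound k A * compound k B := by
  simp only [compound_eq_toMatrix_exteriorPower_map_toLin, toLin_mul _ (Pi.basisFun R m),
    exteriorPower.map_comp, LinearMap.toMatrix_comp _ ((Pi.basisFun R m).exteriorPower k)]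

theorem det_compound_transvection [IsDomain R] [CharZero R] {i j : m} (hij : i ≠ j) (c : R) :
    (compound k (transvection i j c)).det = 1 := by
  set f : R → R := fun x => (compound k (transvection i j x)).det
  have f_add (c d : R) : f (c + d) = f c * f d := by
    simp only [f, ← transvection_mul_transvection_same i j hij, compound_mul, det_mul]
  have f_ne_zero : f c ≠ 0 := by
    refine left_ne_zero_of_mul_eq_one (b := f (-c)) ?_
    rw [← f_add, add_neg_cancel]
    simp [f, transvection_zero, compound_one]
  have f_two_mul : f (2 * c) = f c := by
    let D : Matrix m m R := diagonal (Pi.mulSingle i 2)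
    have hD : D * transvection i j c = transvection i j (2 * c) * D := by
      ext a b
      rw [diagonal_mul, mul_diagonal]
      simp only [transvection, add_apply, one_apply, single_apply, Pi.mulSingle_apply]
      grind
    have hD0 : (compound k D).det ≠ 0 := by
      simp only [D, compound_diagonal, det_diagonal, prod_ne_zero_iff]
      intro s _ a _
      rcases eq_or_ne a i with rfl | hai <;> simp [*]
    have hdet := congrArg (fun X => (compound k X).det) hD
    simp only [compound_mul, det_mul] at hdet
    exact mul_left_cancel₀ hD0 (by simpa only [f, mul_comm] using hdet.symm)
  have : f c * f c = f c := by rw [← f_add, ← two_mul, f_two_mul]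
  simpa [f_ne_zero] using this

variable {k}

theorem det_compound_diagonal (hk : 1 ≤ k) (d : m → R) :
    (compound k (diagonal d)).det = (diagonal d).det ^ (Fintype.card m - 1).choose (k - 1) := by
  rw [compound_diagonal, det_diagonal, det_diagonal, ← prod_prod_powersetCard_univ hk]
  exact (prod_subtype (powersetCard k univ) (fun s => by simp [Set.powersetCard.mem_iff])
    fun s => ∏ a ∈ s, d a).symm

theorem det_compound_of_field {K : Type*} [Field K] [CharZero K] (hk : 1 ≤ k)
    (A : Matrix m m K) :
    (compound k A).det = A.det ^ (Fintype.card m - 1).choose (k - 1) := by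
  induction A using diagonal_transvection_induction with
  | hdiag D _ => exact det_compound_diagonal hk D
  | htransvec t =>
    rw [TransvectionStruct.det, one_pow]
    exact det_compound_transvection k t.hij t.c
  | hmul A B hA hB => rw [compound_mul, det_mul, hA, hB, det_mul, mul_pow]

theorem det_compound_mvPolynomialX (hk : 1 ≤ k) :
    (compound k (mvPolynomialX m m ℤ)).det
      = (mvPolynomialX m m ℤ).det ^ (Fintype.card m - 1).choose (k - 1) := by
  let K := FractionRing (MvPolynomial (m × m) ℤ)
  apply IsFractionRing.injective (MvPolynomial (m × m) ℤ) K
  have hK := det_compound_of_field hk ((mvPolynomialX m m ℤ).map (algebraMap _ K))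
  rwa [compound_map, ← RingHom.mapMatrix_apply, ← RingHom.mapMatrix_apply, ← RingHom.map_det,
    ← RingHom.map_det, ← map_pow] at hK

theorem det_compound (hk : 1 ≤ k) (A : Matrix m m R) :
    (compound k A).det = A.det ^ (Fintype.card m - 1).choose (k - 1) := by
  have hA := congrArg (MvPolynomial.eval₂Hom (Int.castRingHom R) fun p => A p.1 p.2)
    (det_compound_mvPolynomialX hk)
  rwa [map_pow, RingHom.map_det, RingHom.map_det, RingHom.mapMatrix_apply,
    RingHom.mapMatrix_apply, ← compound_map, MvPolynomial.coe_eval₂Hom,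
    mvPolynomialX_map_eval₂] at hA

end Matrix

theorem exteriorPowerMap_eq_map {R M N : Type*} [CommRing R] [AddCommGroup M] [Module R M]
    [AddCommGroup N] [Module R N] (k : ℕ) (f : M →ₗ[R] N) :
    exteriorPowerMap k f = exteriorPower.map k f :=
  exteriorPower.linearMap_ext <| AlternatingMap.ext fun v => Subtype.ext <|
    (ExteriorAlgebra.map_apply_ιMulti f v).trans
      (congrArg Subtype.val (exteriorPower.map_apply_ιMulti f v).symm)

theorem det_exteriorPowerMap_general {R M : Type*} [CommRing R]
    [AddCommGroup M] [Module R M] [Module.Free R M] [Module.Finite R M]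
    (n : ℕ) (hn : Module.finrank R M = n) (φ : M →ₗ[R] M)
    (k : ℕ) (hk1 : 1 ≤ k) :
    LinearMap.det (exteriorPowerMap k φ) = (LinearMap.det φ) ^ Nat.choose (n - 1) (k - 1) := by
  nontriviality R
  let b := Module.finBasisOfFinrankEq R M hn
  rw [exteriorPowerMap_eq_map, ← LinearMap.det_toMatrix (b.exteriorPower k),
    LinearMap.toMatrix_exteriorPower_map, Matrix.det_compound hk1, LinearMap.det_toMatrix,
    Fintype.card_fin]

/-- Let `R` be a principal ideal domain, `M` a free `R`-module of rank `n`, and `φ : M → M` an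
`R`-linear endomorphism.  Then for every `k` with `1 ≤ k ≤ n`, the determinant of the induced map
`⋀^k(φ) : ⋀^k(M) → ⋀^k(M)` equals `det(φ) ^ (n-1).choose (k-1)`. -/
theorem det_exteriorPowerMap {R M : Type*} [CommRing R] [IsDomain R] [IsPrincipalIdealRing R]
    [AddCommGroup M] [Module R M] [Module.Free R M] [Module.Finite R M]
    (n : ℕ) (hn : Module.finrank R M = n) (φ : M →ₗ[R] M)
    (k : ℕ) (hk1 : 1 ≤ k) (hk2 : k ≤ n) :
    LinearMap.det (exteriorPowerMap k φ) = (LinearMap.det φ) ^ Nat.choose (n - 1) (k - 1) :=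
  det_exteriorPowerMap_general n hn φ k hk1
end

section
/- Let R be a principal ideal domain, G a finite group, and M an R-free RG-module of finite rank. If N is a maximal RG-submodule of M (maximal among proper RG-submodules), then there exists a maximal ideal m of R with mM ⊆ N. -/
/-!
Let `I = ann(M/N)` be contained in a maximal ideal `m`. By Nakayama, `m (M/N) ≠ M/N`, since
otherwise some `r ≡ 1 mod m` would kill `M/N`, putting `r ∈ I ⊆ m`. Hence `N + mM` is a proper
submodule; it is `G`-invariant because `G` commutes with `R`, so maximality of `N` forces
`mM ⊆ N`.
-/

namespace Submodule

variable {R M : Type*} [CommRing R] [AddCommGroup M] [Module R M]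

theorem exists_isMaximal_smul_top_ne_top [Module.Finite R M] [Nontrivial M] :
    ∃ m : Ideal R, m.IsMaximal ∧ m • (⊤ : Submodule R M) ≠ ⊤ := by
  obtain ⟨m, hm, hann⟩ := Ideal.exists_le_maximal (Module.annihilator R M)
    (Module.annihilator_eq_top_iff.not.mpr (not_subsingleton M))
  refine ⟨m, hm, fun h => ?_⟩
  obtain ⟨r, hr1, hr0⟩ :=
    exists_sub_one_mem_and_smul_eq_zero_of_fg_of_le_smul m ⊤ Module.Finite.fg_top h.ge
  have hr : r ∈ m := hann (Module.mem_annihilator.mpr fun x => hr0 x trivial)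
  exact hm.ne_top ((Ideal.eq_top_iff_one m).mpr (by simpa using m.sub_mem hr hr1))

theorem exists_isMaximal_sup_smul_top_ne_top [Module.Finite R M] {N : Submodule R M}
    (hN : N ≠ ⊤) : ∃ m : Ideal R, m.IsMaximal ∧ N ⊔ m • (⊤ : Submodule R M) ≠ ⊤ := by
  have : Nontrivial (M ⧸ N) := Quotient.nontrivial_iff.mpr hN
  obtain ⟨m, hm, hne⟩ := exists_isMaximal_smul_top_ne_top (R := R) (M := M ⧸ N)
  refine ⟨m, hm, fun h => hne ?_⟩
  have hmap := congrArg (map N.mkQ) h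
  rwa [map_sup, map_smul'', map_top, range_mkQ, mkQ_map_self, bot_sup_eq] at hmap

theorem smul_mem_sup_ideal_smul_top {G : Type*} [DistribSMul G M] [SMulCommClass G R M]
    {N : Submodule R M} (hN : ∀ g : G, ∀ x ∈ N, g • x ∈ N)
    (I : Ideal R) (g : G) {x : M} (hx : x ∈ N ⊔ I • (⊤ : Submodule R M)) :
    g • x ∈ N ⊔ I • (⊤ : Submodule R M) := by
  have hmap : map (DistribSMul.toLinearMap R M g) (N ⊔ I • ⊤) ≤ N ⊔ I • ⊤ := by
    rw [map_sup, map_smul'']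
    refine sup_le_sup ?_ (smul_mono le_rfl le_top)
    rintro _ ⟨y, hy, rfl⟩
    exact hN g y hy
  exact hmap ⟨x, hx, rfl⟩

end Submodule

theorem exists_maximalIdeal_smul_le_of_maximal_submodule_general
    {R : Type*} [CommRing R]
    {G : Type*} [Group G]
    {M : Type*} [AddCommGroup M] [Module R M] [Module.Finite R M]
    [DistribMulAction G M] [SMulCommClass G R M]
    (N : Submodule R M) (hNinv : ∀ (g : G), ∀ x ∈ N, g • x ∈ N)
    (hNne : N ≠ ⊤)
    (hNmax : ∀ P : Submodule R M, (∀ (g : G), ∀ x ∈ P, g • x ∈ P) → N < P → P = ⊤) :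
    ∃ m : Ideal R, m.IsMaximal ∧ m • (⊤ : Submodule R M) ≤ N := by
  obtain ⟨m, hm, hne⟩ := Submodule.exists_isMaximal_sup_smul_top_ne_top hNne
  refine ⟨m, hm, ?_⟩
  by_contra hle
  exact hne <| hNmax _ (fun g _ hx => Submodule.smul_mem_sup_ideal_smul_top hNinv m g hx)
    (left_lt_sup.mpr hle)

/-- Let `R` be a principal ideal domain, `G` a finite group, and `M` an `R`-free `RG`-module of
finite rank (the `G`-action commuting with the `R`-action).  If `N` is a maximal `RG`-submodule of
`M` (i.e. a `G`-invariant `R`-submodule, maximal among proper ones), then there exists a maximal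
ideal `m` of `R` with `m • M ⊆ N`. -/
theorem exists_maximalIdeal_smul_le_of_maximal_submodule
    {R : Type*} [CommRing R] [IsDomain R] [IsPrincipalIdealRing R]
    {G : Type*} [Group G] [Finite G]
    {M : Type*} [AddCommGroup M] [Module R M] [Module.Free R M] [Module.Finite R M]
    [DistribMulAction G M] [SMulCommClass G R M]
    (N : Submodule R M) (hNinv : ∀ (g : G), ∀ x ∈ N, g • x ∈ N)
    (hNne : N ≠ ⊤)
    (hNmax : ∀ P : Submodule R M, (∀ (g : G), ∀ x ∈ P, g • x ∈ P) → N < P → P = ⊤) :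
    ∃ m : Ideal R, m.IsMaximal ∧ m • (⊤ : Submodule R M) ≤ N :=
  exists_maximalIdeal_smul_le_of_maximal_submodule_general N hNinv hNne hNmax
end

section
/- Let p be a prime, G a finite group, and V an absolutely simple Q_p G-module. Suppose M is a Z_p-form of V such that M/pM is an absolutely simple F_p G-module. Then every Z_p-form of V is isomorphic to M; i.e., V has a unique Z_p-form up to isomorphism. -/
/-!
Rescaling `N` by the least power `pⁿ` that carries it into `M` gives a `G`-stable lattice
`L = pⁿN ⊆ M` with `L ⊄ pM`; the least exponent exists because `⋂ₖ pᵏM = 0` (Krull). The image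
of `L` in `M/pM` is then a nonzero `G`-stable subspace, hence all of `M/pM`, so `L + pM = M` and
Nakayama gives `L = M`. Multiplication by `pⁿ` is therefore a `G`-equivariant isomorphism `N ≅ M`.
-/
open Pointwise

theorem Padic.exists_zpow_mul_norm_le_one {p : ℕ} [Fact p.Prime] (q : ℚ_[p]) :
    ∃ k : ℤ, ‖(p : ℚ_[p]) ^ k * q‖ ≤ 1 := by
  rcases eq_or_ne q 0 with rfl | hq
  · exact ⟨0, by simp⟩
  · refine ⟨-q.valuation, ?_⟩
    rw [norm_mul, Padic.norm_p_zpow, Padic.norm_eq_zpow_neg_valuation hq, neg_neg,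
      ← zpow_add₀ (NeZero.ne _), add_neg_cancel, zpow_zero]

instance ZMod.ringHomSurjective {R : Type*} [Ring R] {n : ℕ} (f : R →+* ZMod n) :
    RingHomSurjective f :=
  ⟨ZMod.ringHom_surjective f⟩

theorem eq_of_not_le_smul_of_reduction_simple {p : ℕ} [Fact p.Prime] {V : Type*}
    [AddCommGroup V] [Module ℤ_[p] V] {G : Type*} [Monoid G] [DistribMulAction G V]
    {M : Submodule ℤ_[p] V} (hMfg : M.FG) (hMinv : ∀ (g : G), ∀ x ∈ M, g • x ∈ M)
    {Q : Type*} [AddCommGroup Q] [Module (ZMod p) Q] [DistribMulAction G Q] (π : M →+ Q)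
    (hπsmul : ∀ (a : ℤ_[p]) (x : M), π (a • x) = PadicInt.toZMod a • π x)
    (hπker : ∀ x : M, π x = 0 ↔ (x : V) ∈ Ideal.span {(p : ℤ_[p])} • M)
    (hπequiv : ∀ (g : G) (x : M), π ⟨g • (x : V), hMinv g _ x.2⟩ = g • π x)
    (hQsimple : ∀ W : Submodule (ZMod p) Q, (∀ (g : G), ∀ x ∈ W, g • x ∈ W) → W = ⊥ ∨ W = ⊤)
    {L : Submodule ℤ_[p] V} (hLM : L ≤ M) (hLinv : ∀ (g : G), ∀ x ∈ L, g • x ∈ L)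
    (hL : ¬ L ≤ Ideal.span {(p : ℤ_[p])} • M) : L = M := by
  let π' : M →ₛₗ[PadicInt.toZMod] Q := { π with map_smul' := hπsmul }
  let W := (L.comap M.subtype).map π'
  have hWinv : ∀ (g : G), ∀ q ∈ W, g • q ∈ W := by
    rintro g _ ⟨m, hm, rfl⟩
    exact ⟨_, hLinv g _ hm, hπequiv g m⟩
  have hW : W ≠ ⊥ := by
    obtain ⟨x, hxL, hx⟩ := SetLike.not_le_iff_exists.mp hL
    rw [Submodule.ne_bot_iff]
    exact ⟨π ⟨x, hLM hxL⟩, ⟨_, hxL, rfl⟩, fun h => hx ((hπker _).mp h)⟩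
  have hle : M ≤ L ⊔ Ideal.span {(p : ℤ_[p])} • M := by
    intro m hm
    obtain ⟨l, hl, hlm⟩ : π ⟨m, hm⟩ ∈ W := (hQsimple W hWinv).resolve_left hW ▸ Submodule.mem_top
    have hml := (hπker (⟨m, hm⟩ - l)).mp (by rw [map_sub, ← hlm]; exact sub_self _)
    exact Submodule.mem_sup.mpr ⟨l, hl, m - l, hml, by simp⟩
  exact le_antisymm hLM (Submodule.le_of_le_smul_of_le_jacobson_bot hMfg
    (PadicInt.maximalIdeal_eq_span_p (p := p) ▸ IsLocalRing.maximalIdeal_le_jacobson ⊥) hle)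

section Lattice

variable {p : ℕ} [Fact p.Prime] {V : Type*} [AddCommGroup V] [Module ℚ_[p] V] [Module ℤ_[p] V]
  [IsScalarTower ℤ_[p] ℚ_[p] V]

theorem zpow_smul_mem_of_le {M : Submodule ℤ_[p] V} {x : V} {m n : ℤ} (hmn : m ≤ n)
    (hx : (p : ℚ_[p]) ^ m • x ∈ M) : (p : ℚ_[p]) ^ n • x ∈ M := by
  obtain ⟨k, rfl⟩ := Int.exists_add_of_le hmn
  have hp := NeZero.ne (p : ℚ_[p])
  have := M.smul_mem ((p : ℤ_[p]) ^ k) hx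
  rwa [← algebraMap_smul ℚ_[p], smul_smul, map_pow, map_natCast, ← zpow_natCast,
    ← zpow_add₀ hp, add_comm] at this

theorem zpow_smul_le_of_le {M N : Submodule ℤ_[p] V} {m n : ℤ} (hmn : m ≤ n)
    (hN : (p : ℚ_[p]) ^ m • N ≤ M) : (p : ℚ_[p]) ^ n • N ≤ M := by
  rintro _ ⟨x, hx, rfl⟩
  exact zpow_smul_mem_of_le hmn (hN ⟨x, hx, rfl⟩)

theorem exists_zpow_smul_mem {M : Submodule ℤ_[p] V}
    (hM : Submodule.span ℚ_[p] (M : Set V) = ⊤) (x : V) : ∃ n : ℤ, (p : ℚ_[p]) ^ n • x ∈ M := by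
  induction (hM ▸ Submodule.mem_top : x ∈ Submodule.span ℚ_[p] (M : Set V)) using
    Submodule.span_induction with
  | mem y hy => exact ⟨0, by simpa using hy⟩
  | zero => exact ⟨0, by simp⟩
  | add y z _ _ hy hz =>
    obtain ⟨m, hm⟩ := hy
    obtain ⟨n, hn⟩ := hz
    refine ⟨max m n, ?_⟩
    rw [smul_add]
    exact M.add_mem (zpow_smul_mem_of_le (le_max_left m n) hm)
      (zpow_smul_mem_of_le (le_max_right m n) hn)
  | smul q y _ hy =>
    obtain ⟨n, hn⟩ := hy
    obtain ⟨k, hk⟩ := Padic.exists_zpow_mul_norm_le_one q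
    refine ⟨k + n, ?_⟩
    have hp := NeZero.ne (p : ℚ_[p])
    obtain ⟨a, ha⟩ : ∃ a : ℤ_[p], (a : ℚ_[p]) = p ^ k * q := ⟨⟨_, hk⟩, rfl⟩
    have := M.smul_mem a hn
    rwa [← algebraMap_smul ℚ_[p] a, smul_smul, PadicInt.algebraMap_apply, ha, mul_right_comm,
      ← zpow_add₀ hp, ← smul_smul] at this

theorem exists_zpow_smul_le {M N : Submodule ℤ_[p] V}
    (hM : Submodule.span ℚ_[p] (M : Set V) = ⊤) (hN : N.FG) :
    ∃ n : ℤ, (p : ℚ_[p]) ^ n • N ≤ M := by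
  induction N, hN using Submodule.fg_induction with
  | singleton x =>
    obtain ⟨n, hn⟩ := exists_zpow_smul_mem hM x
    refine ⟨n, ?_⟩
    rw [Submodule.pointwise_smul_def, Submodule.map_span, Set.image_singleton,
      Submodule.span_singleton_le_iff_mem]
    exact hn
  | sup N₁ N₂ _ _ h₁ h₂ =>
    obtain ⟨m, hm⟩ := h₁
    obtain ⟨n, hn⟩ := h₂
    refine ⟨max m n, ?_⟩
    rw [Submodule.smul_sup', sup_le_iff]
    exact ⟨zpow_smul_le_of_le (le_max_left m n) hm, zpow_smul_le_of_le (le_max_right m n) hn⟩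

theorem eq_zero_of_forall_zpow_smul_mem {M : Submodule ℤ_[p] V} (hM : M.FG) {x : V}
    (hx : ∀ n : ℤ, (p : ℚ_[p]) ^ n • x ∈ M) : x = 0 := by
  have : Module.Finite ℤ_[p] M := Module.Finite.iff_fg.mpr hM
  have hp := NeZero.ne (p : ℚ_[p])
  have hx₀ : x ∈ M := by simpa using hx 0
  suffices (⟨x, hx₀⟩ : M) ∈ (⨅ i : ℕ, IsLocalRing.maximalIdeal ℤ_[p] ^ i • ⊤ : Submodule ℤ_[p] M) by
    rw [Ideal.iInf_pow_smul_eq_bot_of_isLocalRing _ (Ideal.IsMaximal.ne_top inferInstance)] at this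
    simpa using this
  refine Submodule.mem_iInf _ |>.mpr fun i => ?_
  rw [PadicInt.maximalIdeal_eq_span_p, Ideal.span_singleton_pow,
    Submodule.ideal_span_singleton_smul]
  refine ⟨⟨_, hx (-i)⟩, Submodule.mem_top, Subtype.ext ?_⟩
  change ((p : ℤ_[p]) ^ i) • (p : ℚ_[p]) ^ (-(i : ℤ)) • x = x
  rw [← algebraMap_smul ℚ_[p], smul_smul, map_pow, map_natCast, zpow_neg, zpow_natCast,
    mul_inv_cancel₀ (pow_ne_zero i hp), one_smul]

theorem exists_zpow_smul_le_and_not_le_smul {M N : Submodule ℤ_[p] V} (hMfg : M.FG)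
    (hMspan : Submodule.span ℚ_[p] (M : Set V) = ⊤) (hNfg : N.FG) (hN : N ≠ ⊥) :
    ∃ n : ℤ, (p : ℚ_[p]) ^ n • N ≤ M ∧ ¬ (p : ℚ_[p]) ^ n • N ≤ Ideal.span {(p : ℤ_[p])} • M := by
  have hp := NeZero.ne (p : ℚ_[p])
  have hbdd : ∃ b : ℤ, ∀ n : ℤ, (p : ℚ_[p]) ^ n • N ≤ M → b ≤ n := by
    by_contra! h
    obtain ⟨x, hxN, hx⟩ := Submodule.exists_mem_ne_zero_of_ne_bot hN
    refine hx (eq_zero_of_forall_zpow_smul_mem hMfg fun n => ?_)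
    obtain ⟨m, hm, hmn⟩ := h n
    exact zpow_smul_le_of_le hmn.le hm ⟨x, hxN, rfl⟩
  obtain ⟨n, hn, hmin⟩ := Int.exists_least_of_bdd hbdd (exists_zpow_smul_le hMspan hNfg)
  refine ⟨n, hn, fun hle => ?_⟩
  suffices (p : ℚ_[p]) ^ (n - 1) • N ≤ M by linarith [hmin _ this]
  intro y hy
  obtain ⟨x, hxN, rfl⟩ := (Submodule.mem_smul_pointwise_iff_exists _ _ _).mp hy
  have hpx := hle (Submodule.smul_mem_pointwise_smul x _ N hxN)
  rw [Submodule.ideal_span_singleton_smul, Submodule.mem_smul_pointwise_iff_exists] at hpx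
  obtain ⟨m, hm, hmx⟩ := hpx
  convert hm using 1
  rw [zpow_sub_one₀ hp, mul_comm, ← smul_smul, ← hmx, ← algebraMap_smul ℚ_[p] (p : ℤ_[p]),
    map_natCast, smul_smul, inv_mul_cancel₀ hp, one_smul]

end Lattice

theorem unique_form_of_abs_simple_reduction_general
    (p : ℕ) [Fact p.Prime] {G : Type*} [Group G]
    {V : Type*} [AddCommGroup V] [Module ℚ_[p] V]
    [Module ℤ_[p] V] [IsScalarTower ℤ_[p] ℚ_[p] V]
    [DistribMulAction G V] [SMulCommClass G ℚ_[p] V]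
    (hVnt : Nontrivial V)
    (M : Submodule ℤ_[p] V) (hMfg : M.FG)
    (hMspan : Submodule.span ℚ_[p] (M : Set V) = ⊤)
    (hMinv : ∀ (g : G), ∀ x ∈ M, g • x ∈ M)
    {Q : Type*} [AddCommGroup Q] [Module (ZMod p) Q]
    [DistribMulAction G Q]
    (π : ↥M →+ Q)
    (hπsmul : ∀ (a : ℤ_[p]) (x : ↥M), π (a • x) = PadicInt.toZMod a • π x)
    (hπker : ∀ x : ↥M, π x = 0 ↔ (x : V) ∈ Ideal.span {(p : ℤ_[p])} • M)
    (hπequiv : ∀ (g : G) (x : ↥M), π ⟨g • (x : V), hMinv g _ x.2⟩ = g • π x)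
    (hQsimple : ∀ W : Submodule (ZMod p) Q, (∀ (g : G), ∀ x ∈ W, g • x ∈ W) → W = ⊥ ∨ W = ⊤)
    (N : Submodule ℤ_[p] V) (hNfg : N.FG)
    (hNspan : Submodule.span ℚ_[p] (N : Set V) = ⊤)
    (hNinv : ∀ (g : G), ∀ x ∈ N, g • x ∈ N) :
    ∃ e : ↥N ≃ₗ[ℤ_[p]] ↥M, ∀ (g : G) (x : ↥N),
      ((e ⟨g • (x : V), hNinv g _ x.2⟩ : ↥M) : V) = g • ((e x : ↥M) : V) := by
  have hN : N ≠ ⊥ := by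
    rintro rfl
    simp at hNspan
  obtain ⟨n, hle, hnle⟩ := exists_zpow_smul_le_and_not_le_smul hMfg hMspan hNfg hN
  set c := (p : ℚ_[p]) ^ n
  have hc : c ≠ 0 := zpow_ne_zero n (NeZero.ne _)
  have hcN : c • N = M := by
    refine eq_of_not_le_smul_of_reduction_simple hMfg hMinv π hπsmul hπker hπequiv hQsimple hle
      (fun g y hy => ?_) hnle
    obtain ⟨x, hx, rfl⟩ := (Submodule.mem_smul_pointwise_iff_exists _ _ _).mp hy
    rw [smul_comm g c x]
    exact Submodule.smul_mem_pointwise_smul _ c N (hNinv g x hx)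
  refine ⟨(N.equivMapOfInjective _ (smul_right_injective V hc)).trans (LinearEquiv.ofEq _ _ hcN),
    fun g x => ?_⟩
  exact (smul_comm g c (x : V)).symm

/-- Let `p` be a prime, `G` a finite group, and `V` an absolutely simple `ℚ_[p]G`-module (simple
with scalar equivariant endomorphisms).  Suppose `M` is a `ℤ_[p]`-form of `V` such that `M/pM` is
an absolutely simple `𝔽_p G`-module; the reduction `M/pM` is presented as a `ZMod p`-module `Q`
with `G`-action together with an equivariant surjection `π : M → Q` with kernel `pM`.  Then every
`ℤ_[p]`-form `N` of `V` is isomorphic to `M` as a `ℤ_[p]G`-module. -/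
theorem unique_form_of_abs_simple_reduction
    (p : ℕ) [Fact p.Prime] {G : Type*} [Group G] [Finite G]
    {V : Type*} [AddCommGroup V] [Module ℚ_[p] V] [FiniteDimensional ℚ_[p] V]
    [Module ℤ_[p] V] [IsScalarTower ℤ_[p] ℚ_[p] V]
    [DistribMulAction G V] [SMulCommClass G ℚ_[p] V]
    (hVnt : Nontrivial V)
    (hVsimple : ∀ W : Submodule ℚ_[p] V, (∀ (g : G), ∀ x ∈ W, g • x ∈ W) → W = ⊥ ∨ W = ⊤)
    (hVabs : ∀ f : V →ₗ[ℚ_[p]] V, (∀ (g : G) (x : V), f (g • x) = g • f x) →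
      ∃ c : ℚ_[p], f = c • LinearMap.id)
    (M : Submodule ℤ_[p] V) (hMfg : M.FG)
    (hMspan : Submodule.span ℚ_[p] (M : Set V) = ⊤)
    (hMinv : ∀ (g : G), ∀ x ∈ M, g • x ∈ M)
    {Q : Type*} [AddCommGroup Q] [Module (ZMod p) Q]
    [DistribMulAction G Q] [SMulCommClass G (ZMod p) Q]
    (π : ↥M →+ Q) (hπsurj : Function.Surjective π)
    (hπsmul : ∀ (a : ℤ_[p]) (x : ↥M), π (a • x) = PadicInt.toZMod a • π x)
    (hπker : ∀ x : ↥M, π x = 0 ↔ (x : V) ∈ Ideal.span {(p : ℤ_[p])} • M)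
    (hπequiv : ∀ (g : G) (x : ↥M), π ⟨g • (x : V), hMinv g _ x.2⟩ = g • π x)
    (hQnt : Nontrivial Q)
    (hQsimple : ∀ W : Submodule (ZMod p) Q, (∀ (g : G), ∀ x ∈ W, g • x ∈ W) → W = ⊥ ∨ W = ⊤)
    (hQabs : ∀ f : Q →ₗ[ZMod p] Q, (∀ (g : G) (x : Q), f (g • x) = g • f x) →
      ∃ c : ZMod p, f = c • LinearMap.id)
    (N : Submodule ℤ_[p] V) (hNfg : N.FG)
    (hNspan : Submodule.span ℚ_[p] (N : Set V) = ⊤)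
    (hNinv : ∀ (g : G), ∀ x ∈ N, g • x ∈ N) :
    ∃ e : ↥N ≃ₗ[ℤ_[p]] ↥M, ∀ (g : G) (x : ↥N),
      ((e ⟨g • (x : V), hNinv g _ x.2⟩ : ↥M) : V) = g • ((e x : ↥M) : V) :=
  unique_form_of_abs_simple_reduction_general p hVnt M hMfg hMspan hMinv π hπsmul hπker hπequiv
    hQsimple N hNfg hNspan hNinv
end

section
/- Let λ be a partition of n, and let M^λ_Z be the integral Young permutation module on λ-tabloids with its standard Z-basis and associated symmetric 𝔖_n-invariant bilinear form ⟨·|·⟩. If U is a Z𝔖_n-submodule of M^λ_Z with U ⊄ (S^λ_Z)^⊥, then there exists a positive integer m with m·S^λ_Z ⊆ U. -/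
open Finset

noncomputable section

variable (n : ℕ) (l : List ℕ)

/-- A `λ`-tabloid, for the partition `λ` of `n` given by the list `l` of row lengths: a row
function on `{1,…,n}` whose fibers have the prescribed sizes. -/
def Tabloid := {r : Fin n → Fin l.length //
  ∀ j : Fin l.length, (Finset.univ.filter (fun i => r i = j)).card = l.get j}

instance : Fintype (Tabloid n l) := by unfold Tabloid; infer_instance
instance : DecidableEq (Tabloid n l) := by unfold Tabloid; infer_instance

/-- The natural action of `σ ∈ 𝔖_n` on tabloids. -/
def permTabloid (σ : Equiv.Perm (Fin n)) (τ : Tabloid n l) : Tabloid n l :=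
  ⟨fun i => τ.1 (σ⁻¹ i), fun j => by
    have h : (Finset.univ.filter (fun i => τ.1 (σ⁻¹ i) = j)).card
        = (Finset.univ.filter (fun i => τ.1 i = j)).card := by
      rw [← Fintype.card_subtype, ← Fintype.card_subtype]
      exact Fintype.card_congr
        (Equiv.subtypeEquiv (p := fun i => τ.1 (σ⁻¹ i) = j) (q := fun i => τ.1 i = j)
          σ⁻¹ (fun a => Iff.rfl))
    rw [h]; exact τ.2 j⟩

/-- The action of `σ ∈ 𝔖_n` on the Young permutation module `M^λ_ℤ`, the free `ℤ`-module on the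
set of `λ`-tabloids. -/
def actYoung (σ : Equiv.Perm (Fin n)) : (Tabloid n l → ℤ) →ₗ[ℤ] (Tabloid n l → ℤ) :=
  LinearMap.funLeft ℤ ℤ (permTabloid n l σ⁻¹)

/-- A `λ`-tableau: a placement of the numbers `1,…,n` in the cells of the Young diagram of `λ`,
recorded by the row and column index of each entry. -/
structure Tableau where
  row : Fin n → Fin l.length
  col : Fin n → ℕ
  colLt : ∀ x, col x < l.get (row x)
  posInj : Function.Injective (fun x => (row x, col x))
  rowCard : ∀ j, (Finset.univ.filter (fun i => row i = j)).card = l.get j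

/-- The tabloid `{t}` of a tableau `t`. -/
def rowOf (t : Tableau n l) : Tabloid n l := ⟨t.row, t.rowCard⟩

/-- The column stabilizer `C_t` of a tableau `t`. -/
def colStab (t : Tableau n l) : Finset (Equiv.Perm (Fin n)) :=
  Finset.univ.filter (fun σ => ∀ v, t.col (σ v) = t.col v)

/-- The polytabloid `e_t = Σ_{σ ∈ C_t} sgn(σ)·σ{t}` of a tableau `t`. -/
def polytabloid (t : Tableau n l) : Tabloid n l → ℤ :=
  ∑ σ ∈ colStab n l t,
    (Equiv.Perm.sign σ : ℤ) • Pi.single (permTabloid n l σ (rowOf n l t)) (1 : ℤ)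

/-- The integral Specht module `S^λ_ℤ ⊆ M^λ_ℤ`, spanned by the polytabloids. -/
def Specht : Submodule ℤ (Tabloid n l → ℤ) :=
  Submodule.span ℤ (Set.range (polytabloid n l))

/-! The column antisymmetrizer `κ_t = Σ_{σ ∈ C_t} sgn(σ)·σ` maps every tabloid `{s}` into `ℤ·e_t`.
Either two entries of one column of `t` lie in the same row of `{s}`; then their transposition lies
in `C_t` and fixes `{s}`, so `κ_t{s} = -κ_t{s} = 0`. Or `{s} = π{t}` for some `π ∈ C_t`, and
`κ_t{s} = sgn(π)·e_t`. Comparing coefficients of `{t}` gives `κ_t x = ⟨x|e_t⟩·e_t`.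

If `x ∈ U` pairs nontrivially with `S^λ_ℤ`, then `c := ⟨x|e_t⟩ ≠ 0` for some tableau `t`, and
`c·e_t = κ_t x ∈ U`. Since `𝔖_n` permutes the polytabloids transitively, `c·S^λ_ℤ ⊆ U`. -/

section Development

variable {n l}

open Function Equiv

lemma permTabloid_mul (σ ρ : Perm (Fin n)) (s : Tabloid n l) :
    permTabloid n l σ (permTabloid n l ρ s) = permTabloid n l (σ * ρ) s := by
  apply Subtype.ext; funext i
  simp [permTabloid, mul_inv_rev]

lemma permTabloid_one (s : Tabloid n l) : permTabloid n l 1 s = s := rfl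

lemma permTabloid_inv_eq_iff (σ : Perm (Fin n)) (s s' : Tabloid n l) :
    permTabloid n l σ⁻¹ s' = s ↔ s' = permTabloid n l σ s := by
  constructor <;> rintro rfl <;> simp [permTabloid_mul, permTabloid_one]

lemma permTabloid_swap {s : Tabloid n l} {a b : Fin n} (h : s.1 a = s.1 b) :
    permTabloid n l (swap a b) s = s := by
  apply Subtype.ext; funext i
  simp only [permTabloid, swap_inv]
  rcases eq_or_ne i a with rfl | hia
  · rw [swap_apply_left, h]
  rcases eq_or_ne i b with rfl | hib
  · rw [swap_apply_right, h]
  · rw [swap_apply_of_ne_of_ne hia hib]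

lemma actYoung_apply (σ : Perm (Fin n)) (x : Tabloid n l → ℤ) (s : Tabloid n l) :
    actYoung n l σ x s = x (permTabloid n l σ⁻¹ s) := rfl

lemma actYoung_mul (σ ρ : Perm (Fin n)) (x : Tabloid n l → ℤ) :
    actYoung n l (σ * ρ) x = actYoung n l σ (actYoung n l ρ x) := by
  funext s
  simp only [actYoung_apply, permTabloid_mul, mul_inv_rev]

lemma actYoung_single (σ : Perm (Fin n)) (s : Tabloid n l) :
    actYoung n l σ (Pi.single s 1) = Pi.single (permTabloid n l σ s) (1 : ℤ) := by
  funext s'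
  simp only [actYoung_apply, Pi.single_apply, permTabloid_inv_eq_iff]

lemma mem_colStab {t : Tableau n l} {σ : Perm (Fin n)} :
    σ ∈ colStab n l t ↔ ∀ v, t.col (σ v) = t.col v := by
  simp [colStab]

lemma one_mem_colStab (t : Tableau n l) : (1 : Perm (Fin n)) ∈ colStab n l t := by
  simp [mem_colStab]

lemma mul_mem_colStab {t : Tableau n l} {σ ρ : Perm (Fin n)}
    (hσ : σ ∈ colStab n l t) (hρ : ρ ∈ colStab n l t) : σ * ρ ∈ colStab n l t := by
  rw [mem_colStab] at *
  intro v; rw [Perm.mul_apply, hσ, hρ]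

lemma inv_mem_colStab {t : Tableau n l} {σ : Perm (Fin n)}
    (hσ : σ ∈ colStab n l t) : σ⁻¹ ∈ colStab n l t := by
  rw [mem_colStab] at *
  intro v
  simpa using (hσ (σ⁻¹ v)).symm

lemma swap_mem_colStab {t : Tableau n l} {a b : Fin n} (h : t.col a = t.col b) :
    swap a b ∈ colStab n l t := by
  rw [mem_colStab]
  intro v
  rcases eq_or_ne v a with rfl | hva
  · rw [swap_apply_left, h]
  rcases eq_or_ne v b with rfl | hvb
  · rw [swap_apply_right, h]
  · rw [swap_apply_of_ne_of_ne hva hvb]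

lemma conj_mem_colStab {t t' : Tableau n l} {π : Perm (Fin n)}
    (hπ : ∀ x, t.col (π x) = t'.col x) {τ : Perm (Fin n)} (hτ : τ ∈ colStab n l t) :
    π⁻¹ * τ * π ∈ colStab n l t' := by
  rw [mem_colStab] at *
  intro v
  simp [← hπ, hτ]

lemma eq_one_of_mem_colStab_of_permTabloid_rowOf {t : Tableau n l} {σ : Perm (Fin n)}
    (hσ : σ ∈ colStab n l t) (h : permTabloid n l σ (rowOf n l t) = rowOf n l t) : σ = 1 := by
  ext v
  have hrow : t.row (σ v) = t.row v := by
    simpa [permTabloid, rowOf] using (congrFun (congrArg Subtype.val h) (σ v)).symm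
  exact congrArg Fin.val <| t.posInj (Prod.ext hrow (mem_colStab.mp hσ v))

open Finset in
lemma card_filter_eq_sum_card_fiber {α β : Type*} [Fintype α] [Fintype β] [DecidableEq β]
    (g : α → β) (p : α → Prop) [DecidablePred p] :
    #{y | p y} = ∑ i, #{y | g y = i ∧ p y} := by
  rw [card_eq_sum_card_fiberwise (f := g) (t := univ) fun _ _ => mem_univ _]
  simp only [filter_filter, and_comm]

namespace Tableau

open Finset

variable (t : Tableau n l)

lemma eq_of_row_eq_of_col_eq {a b : Fin n} (hrow : t.row a = t.row b)
    (hcol : t.col a = t.col b) : a = b :=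
  t.posInj (Prod.ext hrow hcol)

lemma image_col_filter_row (j : Fin l.length) :
    image t.col {x | t.row x = j} = range (l.get j) := by
  refine eq_of_subset_of_card_le (fun c hc => ?_) ?_
  · obtain ⟨x, hx, rfl⟩ := mem_image.mp hc
    rw [mem_range, ← (mem_filter.mp hx).2]
    exact t.colLt x
  · rw [card_range, card_image_of_injOn fun a ha b hb => t.eq_of_row_eq_of_col_eq (by simp_all),
      t.rowCard]

lemma exists_row_col_eq {j : Fin l.length} {c : ℕ} (h : c < l.get j) :
    ∃ x, t.row x = j ∧ t.col x = c := by
  have : c ∈ image t.col {x | t.row x = j} := by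
    rw [image_col_filter_row]; exact mem_range.mpr h
  simpa using this

lemma card_row_col_lt (j : Fin l.length) (c : ℕ) :
    #{x | t.row x = j ∧ t.col x < c} = min (l.get j) c := by
  rw [← card_image_of_injOn (f := t.col) fun a ha b hb => t.eq_of_row_eq_of_col_eq (by simp_all),
    ← filter_filter, ← filter_image (p := (· < c)), image_col_filter_row, ← card_range (min _ _)]
  congr 1
  ext c'
  simp only [mem_filter, mem_range]
  omega

lemma exists_perm_row_col_eq {f : Fin n → Fin l.length × ℕ} (hf : Injective f)
    (hcell : ∀ x, (f x).2 < l.get (f x).1) :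
    ∃ π : Perm (Fin n), ∀ x, (t.row (π x), t.col (π x)) = f x := by
  choose g hg using fun x => t.exists_row_col_eq (hcell x)
  have hg' : ∀ x, (t.row (g x), t.col (g x)) = f x := fun x => Prod.ext (hg x).1 (hg x).2
  have hinj : Injective g := fun a b hab => hf (by rw [← hg' a, ← hg' b, hab])
  exact ⟨Equiv.ofBijective g hinj.bijective_of_finite, hg'⟩

/-- Count the entries in columns `< c := l.get (s x)` along the rows of `s` and along those of
`t`: row `i` of `s` contributes at most `min (l.get i) c`, row `i` of `t` exactly that, so every
bound is attained and row `s x` of `s` lies entirely in columns `< c`. -/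
lemma col_lt_of_injective {s : Tabloid n l} (hs : Injective fun x => (s.1 x, t.col x))
    (x : Fin n) : t.col x < l.get (s.1 x) := by
  set c := l.get (s.1 x)
  have hle : ∀ i, #{y | s.1 y = i ∧ t.col y < c} ≤ min (l.get i) c := fun i => by
    refine le_min ?_ ?_
    · rw [← s.2 i, ← filter_filter]
      exact card_filter_le _ _
    · calc #{y | s.1 y = i ∧ t.col y < c}
          ≤ #(range c) := card_le_card_of_injOn t.col (fun y hy => by simp_all)
            fun a ha b hb hab => hs (Prod.ext (by simp_all) hab)
        _ = c := card_range c
  have hsum : ∑ i, #{y | s.1 y = i ∧ t.col y < c} = ∑ i, min (l.get i) c := by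
    simp only [← card_filter_eq_sum_card_fiber, ← t.card_row_col_lt]
  have hrow : #{y | s.1 y = s.1 x ∧ t.col y < c} = #{y | s.1 y = s.1 x} := by
    rw [(sum_eq_sum_iff_of_le fun i _ => hle i).1 hsum _ (mem_univ _), s.2, min_self]
  have hx : x ∈ ({y | s.1 y = s.1 x ∧ t.col y < c} : Finset (Fin n)) := by
    rw [← filter_filter, eq_of_subset_of_card_le (filter_subset _ _) (by rw [filter_filter, hrow])]
    simp
  exact (mem_filter.mp hx).2.2

end Tableau

lemma exists_mem_colStab_permTabloid_rowOf_eq {t : Tableau n l} {s : Tabloid n l}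
    (hs : Injective fun x => (s.1 x, t.col x)) :
    ∃ π ∈ colStab n l t, permTabloid n l π (rowOf n l t) = s := by
  obtain ⟨π, hπ⟩ := t.exists_perm_row_col_eq hs (t.col_lt_of_injective hs)
  refine ⟨π⁻¹, inv_mem_colStab (mem_colStab.mpr fun x => congrArg Prod.snd (hπ x)), ?_⟩
  apply Subtype.ext; funext x
  exact congrArg Prod.fst (hπ x)

open Matrix

def colAntisym (t : Tableau n l) : (Tabloid n l → ℤ) →ₗ[ℤ] (Tabloid n l → ℤ) :=
  ∑ σ ∈ colStab n l t, (Perm.sign σ : ℤ) • actYoung n l σ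

lemma colAntisym_apply (t : Tableau n l) (x : Tabloid n l → ℤ) :
    colAntisym t x = ∑ σ ∈ colStab n l t, (Perm.sign σ : ℤ) • actYoung n l σ x := by
  simp [colAntisym]

lemma colAntisym_single_rowOf (t : Tableau n l) :
    colAntisym t (Pi.single (rowOf n l t) 1) = polytabloid n l t := by
  simp only [colAntisym_apply, actYoung_single, polytabloid]

lemma colAntisym_actYoung {t : Tableau n l} {τ : Perm (Fin n)} (hτ : τ ∈ colStab n l t)
    (x : Tabloid n l → ℤ) :
    colAntisym t (actYoung n l τ x) = (Perm.sign τ : ℤ) • colAntisym t x := by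
  simp only [colAntisym_apply, ← actYoung_mul, smul_sum, smul_smul]
  refine sum_nbij' (· * τ) (· * τ⁻¹) (fun σ hσ => mul_mem_colStab hσ hτ)
    (fun σ hσ => mul_mem_colStab hσ (inv_mem_colStab hτ)) (by simp) (by simp) fun σ _ => ?_
  rw [Perm.sign_mul, Units.val_mul, mul_left_comm, ← Units.val_mul, Int.units_mul_self,
    Units.val_one, mul_one]

lemma colAntisym_single_mem_span (t : Tableau n l) (s : Tabloid n l) :
    colAntisym t (Pi.single s 1) ∈ ℤ ∙ polytabloid n l t := by
  by_cases hs : Injective fun x => (s.1 x, t.col x)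
  · obtain ⟨π, hπ, rfl⟩ := exists_mem_colStab_permTabloid_rowOf_eq hs
    rw [← actYoung_single, colAntisym_actYoung hπ, colAntisym_single_rowOf]
    exact Submodule.smul_mem _ _ (Submodule.mem_span_singleton_self _)
  · obtain ⟨a, b, hab, hne⟩ := not_injective_iff.mp hs
    have hswap := colAntisym_actYoung (swap_mem_colStab (congrArg Prod.snd hab)) (Pi.single s 1)
    rw [actYoung_single, permTabloid_swap (congrArg Prod.fst hab), Perm.sign_swap hne] at hswap
    simp only [Units.val_neg, Units.val_one, neg_smul, one_smul] at hswap
    have hzero : colAntisym t (Pi.single s 1) = 0 :=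
      funext fun s' => CharZero.eq_neg_self_iff.mp (congrFun hswap s')
    rw [hzero]
    exact zero_mem _

lemma colAntisym_mem_span (t : Tableau n l) (x : Tabloid n l → ℤ) :
    colAntisym t x ∈ ℤ ∙ polytabloid n l t := by
  rw [pi_eq_sum_univ' x, map_sum]
  refine Submodule.sum_mem _ fun s _ => ?_
  rw [map_smul]
  exact Submodule.smul_mem _ _ (colAntisym_single_mem_span t s)

lemma polytabloid_apply_rowOf (t : Tableau n l) : polytabloid n l t (rowOf n l t) = 1 := by
  rw [polytabloid, Finset.sum_apply, sum_eq_single_of_mem 1 (one_mem_colStab t)]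
  · simp [permTabloid_one]
  · intro σ hσ hne
    rw [Pi.smul_apply, Pi.single_apply,
      if_neg fun h => hne (eq_one_of_mem_colStab_of_permTabloid_rowOf hσ h.symm), smul_zero]

lemma colAntisym_apply_rowOf (t : Tableau n l) (x : Tabloid n l → ℤ) :
    colAntisym t x (rowOf n l t) = x ⬝ᵥ polytabloid n l t := by
  rw [colAntisym_apply, Finset.sum_apply, polytabloid, dotProduct_sum]
  refine sum_nbij' (·⁻¹) (·⁻¹) (fun σ hσ => inv_mem_colStab hσ) (fun σ hσ => inv_mem_colStab hσ)
    (by simp) (by simp) fun σ _ => ?_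
  rw [Pi.smul_apply, actYoung_apply, dotProduct_smul, dotProduct_single, Perm.sign_inv, mul_one]

lemma colAntisym_eq_dotProduct_smul (t : Tableau n l) (x : Tabloid n l → ℤ) :
    colAntisym t x = (x ⬝ᵥ polytabloid n l t) • polytabloid n l t := by
  obtain ⟨a, ha⟩ := Submodule.mem_span_singleton.mp (colAntisym_mem_span t x)
  have := congrFun ha (rowOf n l t)
  rw [Pi.smul_apply, polytabloid_apply_rowOf, smul_eq_mul, mul_one, colAntisym_apply_rowOf] at this
  rw [← ha, this]

lemma exists_actYoung_polytabloid_eq (t t' : Tableau n l) :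
    ∃ σ : Perm (Fin n), actYoung n l σ (polytabloid n l t) = polytabloid n l t' := by
  obtain ⟨π, hπ⟩ := t.exists_perm_row_col_eq t'.posInj t'.colLt
  have hcol : ∀ x, t.col (π x) = t'.col x := fun x => congrArg Prod.snd (hπ x)
  have hcol' : ∀ x, t'.col (π⁻¹ x) = t.col x := fun x => by simp [← hcol]
  have hrowOf : permTabloid n l π⁻¹ (rowOf n l t) = rowOf n l t' :=
    Subtype.ext <| funext fun x => by simpa [permTabloid, rowOf] using congrArg Prod.fst (hπ x)
  refine ⟨π⁻¹, ?_⟩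
  simp only [polytabloid, map_sum, map_smul, actYoung_single]
  refine sum_nbij' (π⁻¹ * · * π) (π * · * π⁻¹) (fun τ hτ => conj_mem_colStab hcol hτ)
    (fun ρ hρ => by simpa using conj_mem_colStab hcol' hρ) (by simp [mul_assoc])
    (by simp [mul_assoc]) fun τ _ => ?_
  have hsign : Perm.sign (π⁻¹ * τ * π) = Perm.sign τ := by
    rw [map_mul, map_mul, map_inv, mul_right_comm, inv_mul_cancel, one_mul]
  rw [hsign, ← hrowOf, permTabloid_mul, permTabloid_mul, mul_inv_cancel_right]

lemma exists_dotProduct_polytabloid_ne_zero {x y : Tabloid n l → ℤ} (hy : y ∈ Specht n l)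
    (hxy : x ⬝ᵥ y ≠ 0) : ∃ t, x ⬝ᵥ polytabloid n l t ≠ 0 := by
  contrapose! hxy
  induction hy using Submodule.span_induction with
  | mem _ h => obtain ⟨t, rfl⟩ := h; exact hxy t
  | zero => exact dotProduct_zero x
  | add _ _ _ _ hy hz => rw [dotProduct_add, hy, hz, add_zero]
  | smul a _ _ hy => rw [dotProduct_smul, hy, smul_zero]

lemma smul_mem_of_forall_smul_polytabloid_mem {U : Submodule ℤ (Tabloid n l → ℤ)} {c : ℤ}
    (hU : ∀ t, c • polytabloid n l t ∈ U) {y : Tabloid n l → ℤ} (hy : y ∈ Specht n l) :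
    c • y ∈ U := by
  induction hy using Submodule.span_induction with
  | mem _ h => obtain ⟨t, rfl⟩ := h; exact hU t
  | zero => simp
  | add _ _ _ _ hy hz => rw [smul_add]; exact U.add_mem hy hz
  | smul a _ _ hy => rw [smul_comm]; exact U.smul_mem a hy

end Development

theorem integral_submodule_theorem
    (U : Submodule ℤ (Tabloid n l → ℤ))
    (hUinv : ∀ (σ : Equiv.Perm (Fin n)), ∀ x ∈ U, actYoung n l σ x ∈ U)
    (hUperp : ¬ (∀ x ∈ U, ∀ y ∈ Specht n l, (∑ τ : Tabloid n l, x τ * y τ) = 0)) :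
    ∃ m : ℕ, 0 < m ∧ ∀ y ∈ Specht n l, (m : ℤ) • y ∈ U := by
  push Not at hUperp
  obtain ⟨x, hxU, y, hyS, hxy⟩ := hUperp
  obtain ⟨t, hc⟩ := exists_dotProduct_polytabloid_ne_zero hyS hxy
  set c := x ⬝ᵥ polytabloid n l t
  have hct : c • polytabloid n l t ∈ U := by
    rw [← colAntisym_eq_dotProduct_smul, colAntisym_apply]
    exact U.sum_mem fun σ _ => U.smul_mem _ (hUinv σ x hxU)
  have hcS : ∀ t', c • polytabloid n l t' ∈ U := fun t' => by
    obtain ⟨σ, hσ⟩ := exists_actYoung_polytabloid_eq t t'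
    rw [← hσ, ← map_smul]
    exact hUinv σ _ hct
  refine ⟨c.natAbs, Int.natAbs_pos.mpr hc, fun y hy => ?_⟩
  rw [← Int.sign_mul_self_eq_natAbs, mul_smul]
  exact U.smul_mem _ (smul_mem_of_forall_smul_polytabloid_mem hcS hy)
end
end
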